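/- arXiv:0912.4978 — 7 statements merged into one kernel-verified Lean document; each statement's English description precedes it below -/
import Mathlib

section
/- Let D₁ and D₂ be tournaments with involution and let f : U → W be a homomorphism from the subdigraph of D₁ induced by U to the subdigraph of D₂ induced by W, with W = f(U). Suppose there is a vertex u ∈ U with u' ∈ U and f(u) = f(u'). Then f(U) ⊆ {v, v'}, where v = f(u). -/
/-! Whatever `x ∈ U` is, the tournament axiom and (DI2) give arcs from `u` or `u'` to `x` and
from `x` to `u` or `u'`. Since `f u = f u'`, both arcs land on `f u`, so `f u ⇄ f x` in `D₂`,
and (DI3) forces `f x = f u` or `f x = (f u)'`. -/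

section DigraphWithInvolution

variable {V : Type*} {E : V → V → Prop} {inv : V → V}

theorem adj_of_adj_inv (hauto : ∀ x y, E x y ↔ E (inv x) (inv y)) (hDI1 : ∀ x, inv (inv x) = x)
    (hDI2 : ∀ x y, E x y → E y (inv x)) {x y : V} (h : E x (inv y)) : E y x := by
  have h' : E (inv x) y := by simpa only [hDI1] using (hauto x (inv y)).mp h
  simpa only [hDI1] using hDI2 _ _ h'

theorem adj_or_adj_inv_of_tournament (hDI2 : ∀ x y, E x y → E y (inv x))
    (htour : ∀ x y, E x y ∨ E y x) (x u : V) : E x u ∨ E x (inv u) :=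
  (htour x u).imp_right (hDI2 u x)

theorem adj_or_inv_adj_of_tournament (hauto : ∀ x y, E x y ↔ E (inv x) (inv y))
    (hDI1 : ∀ x, inv (inv x) = x) (hDI2 : ∀ x y, E x y → E y (inv x))
    (htour : ∀ x y, E x y ∨ E y x) (u x : V) : E u x ∨ E (inv u) x :=
  (htour u x).imp_right fun h => adj_of_adj_inv hauto hDI1 hDI2 (by rwa [hDI1])

theorem eq_or_eq_inv_of_adj_of_adj (hDI3 : ∀ x y, x ≠ y → E x y → E y x → y = inv x)
    {x y : V} (hxy : E x y) (hyx : E y x) : y = x ∨ y = inv x := by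
  by_cases h : x = y
  · exact Or.inl h.symm
  · exact Or.inr (hDI3 x y h hxy hyx)

end DigraphWithInvolution

theorem stmt_4_general {V₁ V₂ : Type*} (E₁ : V₁ → V₁ → Prop) (inv₁ : V₁ → V₁)
    (E₂ : V₂ → V₂ → Prop) (inv₂ : V₂ → V₂)
    -- D₁ is a tournament with involution
    (h₁auto : ∀ x y, E₁ x y ↔ E₁ (inv₁ x) (inv₁ y))
    (h₁DI1 : ∀ x, inv₁ (inv₁ x) = x)
    (h₁DI2 : ∀ x y, E₁ x y → E₁ y (inv₁ x))
    (h₁tour : ∀ x y, E₁ x y ∨ E₁ y x)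
    -- D₂ is a tournament with involution
    (h₂DI3 : ∀ x y, x ≠ y → E₂ x y → E₂ y x → y = inv₂ x)
    -- f : D₁[U] → D₂[W] is a homomorphism, W = f(U)
    (U : Set V₁) (f : V₁ → V₂)
    (hhom : ∀ x ∈ U, ∀ y ∈ U, E₁ x y → E₂ (f x) (f y))
    (u : V₁) (hu : u ∈ U) (hu' : inv₁ u ∈ U) (hfu : f u = f (inv₁ u)) :
    f '' U ⊆ {f u, inv₂ (f u)} := by
  rintro _ ⟨x, hx, rfl⟩
  have hout : E₂ (f u) (f x) := by
    rcases adj_or_inv_adj_of_tournament h₁auto h₁DI1 h₁DI2 h₁tour u x with h | h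
    · exact hhom u hu x hx h
    · simpa only [← hfu] using hhom _ hu' x hx h
  have hin : E₂ (f x) (f u) := by
    rcases adj_or_adj_inv_of_tournament h₁DI2 h₁tour x u with h | h
    · exact hhom x hx u hu h
    · simpa only [← hfu] using hhom x hx _ hu' h
  exact eq_or_eq_inv_of_adj_of_adj h₂DI3 hout hin

/-- For a homomorphism `f` between induced subdigraphs of tournaments with
involution, if `u, u' ∈ U` and `f u = f u'`, then `f(U) ⊆ {v, v'}` where `v = f u`. -/
theorem stmt_4 {V₁ V₂ : Type*} (E₁ : V₁ → V₁ → Prop) (inv₁ : V₁ → V₁)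
    (E₂ : V₂ → V₂ → Prop) (inv₂ : V₂ → V₂)
    -- D₁ is a tournament with involution
    (h₁refl : ∀ x, E₁ x x)
    (h₁auto : ∀ x y, E₁ x y ↔ E₁ (inv₁ x) (inv₁ y))
    (h₁DI1 : ∀ x, inv₁ (inv₁ x) = x)
    (h₁DI2 : ∀ x y, E₁ x y → E₁ y (inv₁ x))
    (h₁DI3 : ∀ x y, x ≠ y → E₁ x y → E₁ y x → y = inv₁ x)
    (h₁tour : ∀ x y, E₁ x y ∨ E₁ y x)
    -- D₂ is a tournament with involution
    (h₂refl : ∀ x, E₂ x x)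
    (h₂auto : ∀ x y, E₂ x y ↔ E₂ (inv₂ x) (inv₂ y))
    (h₂DI1 : ∀ x, inv₂ (inv₂ x) = x)
    (h₂DI2 : ∀ x y, E₂ x y → E₂ y (inv₂ x))
    (h₂DI3 : ∀ x y, x ≠ y → E₂ x y → E₂ y x → y = inv₂ x)
    (h₂tour : ∀ x y, E₂ x y ∨ E₂ y x)
    -- f : D₁[U] → D₂[W] is a homomorphism, W = f(U)
    (U : Set V₁) (f : V₁ → V₂)
    (hhom : ∀ x ∈ U, ∀ y ∈ U, E₁ x y → E₂ (f x) (f y))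
    (u : V₁) (hu : u ∈ U) (hu' : inv₁ u ∈ U) (hfu : f u = f (inv₁ u)) :
    f '' U ⊆ {f u, inv₂ (f u)} :=
  stmt_4_general E₁ inv₁ E₂ inv₂ h₁auto h₁DI1 h₁DI2 h₁tour h₂DI3 U f hhom u hu hu' hfu
end

section
/- Let D₁ and D₂ be tournaments with involution and let f : U → W be a homomorphism from D₁[U] to D₂[W]. If there is a vertex u ∈ U with u' ∈ U and f(u) = f(u'), then f extends to a homomorphism f* : D₁ → D₂ defined on all of V(D₁). -/
/-!
Since `u` and `u'` both lie in `U`, every `x ∈ U` has an edge towards one of them and an edge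
coming from the other, so `f x` is joined in both directions to `w := f u = f u'`. Sending every
vertex outside `U` to the looped vertex `w` therefore extends `f` to a homomorphism.
-/

section Extension

variable {V₁ V₂ : Type*} {E₁ : V₁ → V₁ → Prop} {inv₁ : V₁ → V₁}

theorem edge_inv_left_of_edge (h₁auto : ∀ x y, E₁ x y ↔ E₁ (inv₁ x) (inv₁ y))
    (h₁DI1 : ∀ x, inv₁ (inv₁ x) = x) (h₁DI2 : ∀ x y, E₁ x y → E₁ y (inv₁ x))
    {x y : V₁} (h : E₁ x y) : E₁ (inv₁ y) x := by
  simpa only [h₁DI1] using h₁DI2 _ _ ((h₁auto x y).mp h)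

theorem edge_in_and_out_of_inv_pair (h₁auto : ∀ x y, E₁ x y ↔ E₁ (inv₁ x) (inv₁ y))
    (h₁DI1 : ∀ x, inv₁ (inv₁ x) = x) (h₁DI2 : ∀ x y, E₁ x y → E₁ y (inv₁ x))
    (h₁tour : ∀ x y, E₁ x y ∨ E₁ y x) (x u : V₁) :
    (E₁ x u ∧ E₁ (inv₁ u) x) ∨ (E₁ u x ∧ E₁ x (inv₁ u)) := by
  rcases h₁tour x u with h | h
  · exact .inl ⟨h, edge_inv_left_of_edge h₁auto h₁DI1 h₁DI2 h⟩
  · exact .inr ⟨h, h₁DI2 _ _ h⟩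

open Classical in
theorem exists_hom_extension_of_forall_edges {E₂ : V₂ → V₂ → Prop} (U : Set V₁) (f : V₁ → V₂)
    (hhom : ∀ x ∈ U, ∀ y ∈ U, E₁ x y → E₂ (f x) (f y)) (w : V₂) (hw : E₂ w w)
    (hto : ∀ x ∈ U, E₂ (f x) w) (hfrom : ∀ x ∈ U, E₂ w (f x)) :
    ∃ g : V₁ → V₂, (∀ x y, E₁ x y → E₂ (g x) (g y)) ∧ ∀ x ∈ U, g x = f x := by
  refine ⟨fun x => if x ∈ U then f x else w, fun x y hxy => ?_, fun x hx => if_pos hx⟩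
  by_cases hx : x ∈ U <;> by_cases hy : y ∈ U <;> simp only [hx, hy, if_true, if_false]
  · exact hhom x hx y hy hxy
  · exact hto x hx
  · exact hfrom y hy
  · exact hw

end Extension

theorem stmt_5_general {V₁ V₂ : Type*} (E₁ : V₁ → V₁ → Prop) (inv₁ : V₁ → V₁)
    (E₂ : V₂ → V₂ → Prop)
    (h₁auto : ∀ x y, E₁ x y ↔ E₁ (inv₁ x) (inv₁ y))
    (h₁DI1 : ∀ x, inv₁ (inv₁ x) = x)
    (h₁DI2 : ∀ x y, E₁ x y → E₁ y (inv₁ x))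
    (h₁tour : ∀ x y, E₁ x y ∨ E₁ y x)
    (h₂refl : ∀ x, E₂ x x)
    (U : Set V₁) (f : V₁ → V₂)
    (hhom : ∀ x ∈ U, ∀ y ∈ U, E₁ x y → E₂ (f x) (f y))
    (u : V₁) (hu : u ∈ U) (hu' : inv₁ u ∈ U) (hfu : f u = f (inv₁ u)) :
    ∃ g : V₁ → V₂, (∀ x y, E₁ x y → E₂ (g x) (g y)) ∧ ∀ x ∈ U, g x = f x := by
  have hedges : ∀ x ∈ U, E₂ (f x) (f u) ∧ E₂ (f u) (f x) := by
    intro x hx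
    rcases edge_in_and_out_of_inv_pair h₁auto h₁DI1 h₁DI2 h₁tour x u with ⟨hxu, hux⟩ | ⟨hux, hxu⟩
    · exact ⟨hhom x hx u hu hxu, hfu ▸ hhom _ hu' x hx hux⟩
    · exact ⟨hfu ▸ hhom x hx _ hu' hxu, hhom u hu x hx hux⟩
  exact exists_hom_extension_of_forall_edges U f hhom (f u) (h₂refl _)
    (fun x hx => (hedges x hx).1) (fun x hx => (hedges x hx).2)

/-- For a homomorphism `f` between induced subdigraphs of tournaments with
involution, if `u, u' ∈ U` and `f u = f u'`, then `f` extends to a homomorphism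
`f* : D₁ → D₂`. -/
theorem stmt_5 {V₁ V₂ : Type*} (E₁ : V₁ → V₁ → Prop) (inv₁ : V₁ → V₁)
    (E₂ : V₂ → V₂ → Prop) (inv₂ : V₂ → V₂)
    (h₁refl : ∀ x, E₁ x x)
    (h₁auto : ∀ x y, E₁ x y ↔ E₁ (inv₁ x) (inv₁ y))
    (h₁DI1 : ∀ x, inv₁ (inv₁ x) = x)
    (h₁DI2 : ∀ x y, E₁ x y → E₁ y (inv₁ x))
    (h₁DI3 : ∀ x y, x ≠ y → E₁ x y → E₁ y x → y = inv₁ x)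
    (h₁tour : ∀ x y, E₁ x y ∨ E₁ y x)
    (h₂refl : ∀ x, E₂ x x)
    (h₂auto : ∀ x y, E₂ x y ↔ E₂ (inv₂ x) (inv₂ y))
    (h₂DI1 : ∀ x, inv₂ (inv₂ x) = x)
    (h₂DI2 : ∀ x y, E₂ x y → E₂ y (inv₂ x))
    (h₂DI3 : ∀ x y, x ≠ y → E₂ x y → E₂ y x → y = inv₂ x)
    (h₂tour : ∀ x y, E₂ x y ∨ E₂ y x)
    (U : Set V₁) (f : V₁ → V₂)
    (hhom : ∀ x ∈ U, ∀ y ∈ U, E₁ x y → E₂ (f x) (f y))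
    (u : V₁) (hu : u ∈ U) (hu' : inv₁ u ∈ U) (hfu : f u = f (inv₁ u)) :
    ∃ g : V₁ → V₂, (∀ x y, E₁ x y → E₂ (g x) (g y)) ∧ ∀ x ∈ U, g x = f x :=
  stmt_5_general E₁ inv₁ E₂ h₁auto h₁DI1 h₁DI2 h₁tour h₂refl U f hhom u hu hu' hfu
end

section
/- Let D₁ and D₂ be tournaments with involution and let f : U → W be a homomorphism from D₁[U] to D₂[W]. Assume that for every vertex v ∈ V(D₂), f(U) is not contained in {v, v'}. Then f(u') = f(u)' whenever both u and u' belong to U. -/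
/-! If `f` identified `u` with `u'`, then every `w ∈ U` would have edges to and from the common
image `a`: a tournament edge between `u` and `w` in either direction yields, through the
involution axioms, an edge in the opposite direction between `w` and one of `u, u'`. By (DI3)
all of `f(U)` would then lie in `{a, a'}`. So `f u ≠ f u'`, and since `f` maps the 2-cycle
`u ⇄ u'` to a 2-cycle, (DI3) forces `f u' = (f u)'`. -/

section InvolutionDigraph

variable {V : Type*} {E : V → V → Prop} {inv : V → V}

theorem edge_self_inv (hrefl : ∀ x, E x x) (hDI2 : ∀ x y, E x y → E y (inv x)) (x : V) :
    E x (inv x) :=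
  hDI2 x x (hrefl x)

theorem edge_inv_self (hrefl : ∀ x, E x x) (hDI1 : ∀ x, inv (inv x) = x)
    (hDI2 : ∀ x y, E x y → E y (inv x)) (x : V) : E (inv x) x := by
  simpa only [hDI1] using edge_self_inv hrefl hDI2 (inv x)

/-- Three applications of (DI2): `x → y → x' → y' → x'' = x`. -/
theorem edge_inv_left_of_edge_s6 (hDI1 : ∀ x, inv (inv x) = x)
    (hDI2 : ∀ x y, E x y → E y (inv x)) {x y : V} (h : E x y) : E (inv y) x := by
  simpa only [hDI1] using hDI2 _ _ (hDI2 _ _ (hDI2 x y h))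

theorem edge_to_pair_and_from_pair (hDI1 : ∀ x, inv (inv x) = x)
    (hDI2 : ∀ x y, E x y → E y (inv x)) (htour : ∀ x y, E x y ∨ E y x) (u w : V) :
    (E w u ∨ E w (inv u)) ∧ (E u w ∨ E (inv u) w) := by
  rcases htour u w with huw | hwu
  · exact ⟨Or.inr (hDI2 u w huw), Or.inl huw⟩
  · exact ⟨Or.inl hwu, Or.inr (edge_inv_left_of_edge_s6 hDI1 hDI2 hwu)⟩

theorem eq_or_eq_inv_of_edges (hDI3 : ∀ x y, x ≠ y → E x y → E y x → y = inv x) {a b : V}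
    (hab : E a b) (hba : E b a) : b = a ∨ b = inv a := by
  by_cases h : a = b
  · exact Or.inl h.symm
  · exact Or.inr (hDI3 a b h hab hba)

end InvolutionDigraph

theorem image_subset_pair_of_map_inv_eq {V₁ V₂ : Type*} {E₁ : V₁ → V₁ → Prop} {inv₁ : V₁ → V₁}
    {E₂ : V₂ → V₂ → Prop} {inv₂ : V₂ → V₂}
    (h₁DI1 : ∀ x, inv₁ (inv₁ x) = x) (h₁DI2 : ∀ x y, E₁ x y → E₁ y (inv₁ x))
    (h₁tour : ∀ x y, E₁ x y ∨ E₁ y x)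
    (h₂DI3 : ∀ x y, x ≠ y → E₂ x y → E₂ y x → y = inv₂ x)
    {U : Set V₁} {f : V₁ → V₂} (hhom : ∀ x ∈ U, ∀ y ∈ U, E₁ x y → E₂ (f x) (f y))
    {u : V₁} (hu : u ∈ U) (hu' : inv₁ u ∈ U) (hfu : f (inv₁ u) = f u) :
    f '' U ⊆ {f u, inv₂ (f u)} := by
  rintro _ ⟨w, hw, rfl⟩
  obtain ⟨hto, hfrom⟩ := edge_to_pair_and_from_pair h₁DI1 h₁DI2 h₁tour u w
  have hto' : E₂ (f w) (f u) := by
    rcases hto with h | h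
    · exact hhom w hw u hu h
    · simpa only [hfu] using hhom w hw _ hu' h
  have hfrom' : E₂ (f u) (f w) := by
    rcases hfrom with h | h
    · exact hhom u hu w hw h
    · simpa only [hfu] using hhom _ hu' w hw h
  exact eq_or_eq_inv_of_edges h₂DI3 hfrom' hto'

theorem stmt_6_general {V₁ V₂ : Type*} (E₁ : V₁ → V₁ → Prop) (inv₁ : V₁ → V₁)
    (E₂ : V₂ → V₂ → Prop) (inv₂ : V₂ → V₂)
    (h₁refl : ∀ x, E₁ x x)
    (h₁DI1 : ∀ x, inv₁ (inv₁ x) = x)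
    (h₁DI2 : ∀ x y, E₁ x y → E₁ y (inv₁ x))
    (h₁tour : ∀ x y, E₁ x y ∨ E₁ y x)
    (h₂DI3 : ∀ x y, x ≠ y → E₂ x y → E₂ y x → y = inv₂ x)
    (U : Set V₁) (f : V₁ → V₂)
    (hhom : ∀ x ∈ U, ∀ y ∈ U, E₁ x y → E₂ (f x) (f y))
    (hnot : ∀ v : V₂, ¬ (f '' U ⊆ {v, inv₂ v})) :
    ∀ u ∈ U, inv₁ u ∈ U → f (inv₁ u) = inv₂ (f u) := by
  intro u hu hu'
  have hne : f (inv₁ u) ≠ f u := fun hfu =>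
    hnot (f u) (image_subset_pair_of_map_inv_eq h₁DI1 h₁DI2 h₁tour h₂DI3 hhom hu hu' hfu)
  exact h₂DI3 _ _ hne.symm (hhom u hu _ hu' (edge_self_inv h₁refl h₁DI2 u))
    (hhom _ hu' u hu (edge_inv_self h₁refl h₁DI1 h₁DI2 u))

/-- For a homomorphism `f` between induced subdigraphs of tournaments with
involution, if `f(U)` is not contained in any `{v, v'}`, then `f(u') = f(u)'` whenever
`u, u' ∈ U`. -/
theorem stmt_6 {V₁ V₂ : Type*} (E₁ : V₁ → V₁ → Prop) (inv₁ : V₁ → V₁)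
    (E₂ : V₂ → V₂ → Prop) (inv₂ : V₂ → V₂)
    (h₁refl : ∀ x, E₁ x x)
    (h₁auto : ∀ x y, E₁ x y ↔ E₁ (inv₁ x) (inv₁ y))
    (h₁DI1 : ∀ x, inv₁ (inv₁ x) = x)
    (h₁DI2 : ∀ x y, E₁ x y → E₁ y (inv₁ x))
    (h₁DI3 : ∀ x y, x ≠ y → E₁ x y → E₁ y x → y = inv₁ x)
    (h₁tour : ∀ x y, E₁ x y ∨ E₁ y x)
    (h₂refl : ∀ x, E₂ x x)
    (h₂auto : ∀ x y, E₂ x y ↔ E₂ (inv₂ x) (inv₂ y))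
    (h₂DI1 : ∀ x, inv₂ (inv₂ x) = x)
    (h₂DI2 : ∀ x y, E₂ x y → E₂ y (inv₂ x))
    (h₂DI3 : ∀ x y, x ≠ y → E₂ x y → E₂ y x → y = inv₂ x)
    (h₂tour : ∀ x y, E₂ x y ∨ E₂ y x)
    (U : Set V₁) (f : V₁ → V₂)
    (hhom : ∀ x ∈ U, ∀ y ∈ U, E₁ x y → E₂ (f x) (f y))
    (hnot : ∀ v : V₂, ¬ (f '' U ⊆ {v, inv₂ v})) :
    ∀ u ∈ U, inv₁ u ∈ U → f (inv₁ u) = inv₂ (f u) :=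
  stmt_6_general E₁ inv₁ E₂ inv₂ h₁refl h₁DI1 h₁DI2 h₁tour h₂DI3 U f hhom hnot
end

section
/- Every retract of a homomorphism-homogeneous digraph is homomorphism-homogeneous. Precisely: let D be a finite digraph that is homomorphism-homogeneous, and let D* be a retract of D, i.e., there are homomorphisms r : D → D* and j : D* → D with r ∘ j = id. Then D* is homomorphism-homogeneous. -/
/-- A digraph `(V, E)` is homomorphism-homogeneous if every homomorphism between finitely
induced subdigraphs extends to an endomorphism. -/
def IsHomHom {V : Type*} (E : V → V → Prop) : Prop :=
  ∀ (U : Set V) (f : V → V), U.Finite →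
    (∀ x ∈ U, ∀ y ∈ U, E x y → E (f x) (f y)) →
    ∃ g : V → V, (∀ x y, E x y → E (g x) (g y)) ∧ ∀ x ∈ U, g x = f x

theorem IsHomHom.of_retract {V V' : Type*} {E : V → V → Prop} {E' : V' → V' → Prop}
    (r : V → V') (j : V' → V)
    (hr : ∀ x y, E x y → E' (r x) (r y))
    (hj : ∀ x y, E' x y → E (j x) (j y))
    (hrj : ∀ x, r (j x) = x)
    (hD : IsHomHom E) :
    IsHomHom E' := by
  intro U f hU hf
  have hlift : ∀ x ∈ j '' U, ∀ y ∈ j '' U, E x y → E ((j ∘ f ∘ r) x) ((j ∘ f ∘ r) y) := by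
    rintro _ ⟨u, hu, rfl⟩ _ ⟨v, hv, rfl⟩ huv
    have hf_uv : E' (f u) (f v) := hf u hu v hv (by simpa only [hrj] using hr _ _ huv)
    simpa only [Function.comp_apply, hrj] using hj _ _ hf_uv
  obtain ⟨g, hg, hgU⟩ := hD (j '' U) (j ∘ f ∘ r) (hU.image j) hlift
  refine ⟨r ∘ g ∘ j, fun x y hxy => hr _ _ (hg _ _ (hj _ _ hxy)), fun u hu => ?_⟩
  simp only [Function.comp_apply, hgU (j u) (Set.mem_image_of_mem j hu), hrj]

theorem stmt_8_general {V V' : Type*}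
    (E : V → V → Prop) (E' : V' → V' → Prop)
    (r : V → V') (j : V' → V)
    (hr : ∀ x y, E x y → E' (r x) (r y))
    (hj : ∀ x y, E' x y → E (j x) (j y))
    (hrj : ∀ x, r (j x) = x)
    (hD : IsHomHom E) :
    IsHomHom E' :=
  IsHomHom.of_retract r j hr hj hrj hD

/-- Every retract of a finite homomorphism-homogeneous digraph is
homomorphism-homogeneous. -/
theorem stmt_8 {V V' : Type*} [Fintype V] [Fintype V']
    (E : V → V → Prop) (E' : V' → V' → Prop)
    (r : V → V') (j : V' → V)
    (hr : ∀ x y, E x y → E' (r x) (r y))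
    (hj : ∀ x y, E' x y → E (j x) (j y))
    (hrj : ∀ x, r (j x) = x)
    (hD : IsHomHom E) :
    IsHomHom E' :=
  stmt_8_general E E' r j hr hj hrj hD
end

section
/- A finite quasiorder (A, ≤) is homomorphism-homogeneous if and only if its quotient partial order (A/≡, ≤), where x ≡ y iff x ≤ y and y ≤ x, is homomorphism-homogeneous. (Here homomorphism-homogeneity is taken in the sense of reflexive digraphs given by the order relation.) -/
/-!
The quotient map `π : A → A/≡` and any section `σ` of it are homomorphisms with `π ∘ σ = id`,
so `A/≡` is a retract of `A`, and retracts of homomorphism-homogeneous structures are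
homomorphism-homogeneous. Conversely, a homomorphism `f` on a finite `U ⊆ A` descends to a
homomorphism on `π '' U`, because `≡`-equivalent points have `≡`-equivalent images; an extension
`ḡ` of the descended map lifts to the endomorphism `σ ∘ ḡ ∘ π` of `A`, which agrees with `f` on
`U` up to `≡`. Since `≤` only sees `≡`-classes, overwriting it by `f` on `U` keeps it monotone.
-/

theorem IsHomHom.of_retraction {V W : Type*} {E : V → V → Prop} {F : W → W → Prop}
    (π : V → W) (σ : W → V) (hπ : ∀ x y, E x y → F (π x) (π y))
    (hσ : ∀ p q, F p q → E (σ p) (σ q)) (hπσ : Function.LeftInverse π σ) (h : IsHomHom E) :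
    IsHomHom F := by
  intro U f hU hf
  obtain ⟨g, hg, hgf⟩ := h (σ '' U) (σ ∘ f ∘ π) (hU.image σ) <| by
    rintro _ ⟨p, hp, rfl⟩ _ ⟨q, hq, rfl⟩ hpq
    have hpq' : F p q := by simpa only [hπσ _] using hπ _ _ hpq
    simpa only [Function.comp_apply, hπσ _] using hσ _ _ (hf p hp q hq hpq')
  refine ⟨π ∘ g ∘ σ, fun p q hpq => hπ _ _ (hg _ _ (hσ p q hpq)), fun q hq => ?_⟩
  change π (g (σ q)) = f q
  rw [hgf (σ q) ⟨q, hq, rfl⟩, Function.comp_apply, Function.comp_apply, hπσ q, hπσ]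

section Antisymmetrization

variable {α β : Type*} [Preorder α] [Preorder β]

local notation "π" => toAntisymmetrization (· ≤ ·)

theorem Monotone.of_toAntisymmetrization_eq {g h : α → β} (hh : Monotone h)
    (hgh : ∀ a, π (g a) = π (h a)) : Monotone g := fun a b hab =>
  show π (g a) ≤ π (g b) by rw [hgh, hgh]; exact hh hab

theorem MonotoneOn.exists_antisymmetrization {f : α → β} {U : Set α} (hf : MonotoneOn f U) :
    ∃ f' : Antisymmetrization α (· ≤ ·) → Antisymmetrization β (· ≤ ·),
      MonotoneOn f' (π '' U) ∧ ∀ a ∈ U, f' (π a) = π (f a) := by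
  obtain ⟨s, hs⟩ : ∃ s : Antisymmetrization α (· ≤ ·) → α,
      ∀ a ∈ U, s (π a) ∈ U ∧ π (s (π a)) = π a := by
    have : ∀ q, ∃ a, q ∈ π '' U → a ∈ U ∧ π a = q := fun q => by
      by_cases hq : q ∈ π '' U
      · obtain ⟨a, ha, rfl⟩ := hq
        exact ⟨a, fun _ => ⟨ha, rfl⟩⟩
      · exact ⟨ofAntisymmetrization _ q, fun h => absurd h hq⟩
    choose s hs using this
    exact ⟨s, fun a ha => hs _ ⟨a, ha, rfl⟩⟩
  refine ⟨fun q => π (f (s q)), ?_, fun a ha => ?_⟩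
  · rintro _ ⟨a, ha, rfl⟩ _ ⟨b, hb, rfl⟩ hab
    obtain ⟨ha', hsa⟩ := hs a ha
    obtain ⟨hb', hsb⟩ := hs b hb
    exact hf ha' hb' (by rwa [← toAntisymmetrization_le_toAntisymmetrization_iff, hsa, hsb])
  · obtain ⟨ha', hsa⟩ := hs a ha
    have hle : s (π a) ≤ a := toAntisymmetrization_le_toAntisymmetrization_iff.1 hsa.le
    have hge : a ≤ s (π a) := toAntisymmetrization_le_toAntisymmetrization_iff.1 hsa.ge
    exact le_antisymm (hf ha' ha hle) (hf ha ha' hge)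

theorem IsHomHom.of_antisymmetrization
    (h : IsHomHom (fun p q : Antisymmetrization α (· ≤ ·) => p ≤ q)) :
    IsHomHom (fun a b : α => a ≤ b) := by
  classical
  intro U f hU hf
  obtain ⟨f', hf'mono, hf'⟩ := MonotoneOn.exists_antisymmetrization hf
  obtain ⟨g', hg', hg'f'⟩ := h _ f' (hU.image π) hf'mono
  set k := ofAntisymmetrization (· ≤ ·) ∘ g' ∘ π
  have hk : Monotone k := fun a b hab =>
    ofAntisymmetrization_le_ofAntisymmetrization_iff.2 (hg' _ _ (toAntisymmetrization_mono hab))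
  refine ⟨U.piecewise f k, Monotone.of_toAntisymmetrization_eq hk fun a => ?_,
    fun a ha => U.piecewise_eq_of_mem _ _ ha⟩
  by_cases ha : a ∈ U
  · simp [k, ha, hg'f' _ ⟨a, ha, rfl⟩, hf' a ha]
  · simp [ha]

end Antisymmetrization

theorem stmt_9_general {A : Type*} [Preorder A] :
    IsHomHom (fun x y : A => x ≤ y) ↔
      IsHomHom (fun x y : Antisymmetrization A (· ≤ ·) => x ≤ y) :=
  ⟨IsHomHom.of_retraction _ _ toAntisymmetrization_mono
      (fun _ _ => ofAntisymmetrization_le_ofAntisymmetrization_iff.2)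
      (toAntisymmetrization_ofAntisymmetrization _),
    IsHomHom.of_antisymmetrization⟩

/-- A finite quasiorder is homomorphism-homogeneous iff its quotient
partial order (its antisymmetrization) is homomorphism-homogeneous. -/
theorem stmt_9 {A : Type*} [Fintype A] [Preorder A] :
    IsHomHom (fun x y : A => x ≤ y) ↔
      IsHomHom (fun x y : Antisymmetrization A (· ≤ ·) => x ≤ y) :=
  stmt_9_general
end

section
/- Let D be a finite homomorphism-homogeneous reflexive improper digraph that is bidirectionally disconnected. Then for every θ(D)-class S, the induced subdigraph D[S] is a complete reflexive graph, i.e., (x,y) is an edge for all x, y ∈ S. -/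
/-- The bidirectional connectedness relation `θ(D)`: the equivalence closure of the
double-edge relation `⇄`. -/
def Theta {V : Type*} (E : V → V → Prop) : V → V → Prop :=
  Relation.EqvGen (fun a b => E a b ∧ E b a)

/-- `E` is improper: neither symmetric nor antisymmetric. -/
def Improper {V : Type*} (E : V → V → Prop) : Prop :=
  (∃ x y, x ≠ y ∧ E x y ∧ E y x) ∧ (∃ x y, E x y ∧ ¬ E y x)

/-- `D` is bidirectionally disconnected: there is an edge between two distinct
`θ(D)`-classes. -/
def BidirDisconnected {V : Type*} (E : V → V → Prop) : Prop :=
  ∃ x y, ¬ Theta E x y ∧ E x y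

theorem Relation.EqvGen.lift {α β : Type*} {r : α → α → Prop} {p : β → β → Prop} {a b : α}
    (f : α → β) (h : ∀ a b, r a b → p (f a) (f b)) (hab : EqvGen r a b) :
    EqvGen p (f a) (f b) := by
  induction hab with
  | rel a b hab => exact .rel _ _ (h a b hab)
  | refl a => exact .refl _
  | symm a b _ ih => exact .symm _ _ ih
  | trans a b c _ _ ihab ihbc => exact .trans _ _ _ ihab ihbc

theorem Theta.map {V : Type*} {E : V → V → Prop} {g : V → V}
    (hg : ∀ x y, E x y → E (g x) (g y)) {x y : V} (h : Theta E x y) :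
    Theta E (g x) (g y) :=
  Relation.EqvGen.lift g (fun _ _ hab => ⟨hg _ _ hab.1, hg _ _ hab.2⟩) h

theorem IsHomHom.exists_endomorphism_of_not_edge {V : Type*} {E : V → V → Prop}
    (hhh : IsHomHom E) (hrefl : ∀ x, E x x) {x y u v : V} (hxy : ¬ E x y) (huv : E u v) :
    ∃ g : V → V, (∀ a b, E a b → E (g a) (g b)) ∧ g y = u ∧ g x = v := by
  classical
  have hne : y ≠ x := fun h => hxy (h ▸ hrefl y)
  let f : V → V := fun w => if w = y then u else v
  have hfy : f y = u := if_pos rfl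
  have hfx : f x = v := if_neg hne.symm
  have hf : ∀ a ∈ ({y, x} : Set V), ∀ b ∈ ({y, x} : Set V), E a b → E (f a) (f b) := by
    rintro a (rfl | rfl) b (rfl | rfl) hab
    · simpa only [hfy] using hrefl u
    · simpa only [hfy, hfx] using huv
    · exact absurd hab hxy
    · simpa only [hfx] using hrefl v
  obtain ⟨g, hg, hgf⟩ := hhh {y, x} f (Set.toFinite _) hf
  exact ⟨g, hg, (hgf y (by simp)).trans hfy, (hgf x (by simp)).trans hfx⟩

theorem stmt_13_general {V : Type*} (E : V → V → Prop)
    (hrefl : ∀ x, E x x) (hbd : BidirDisconnected E)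
    (hhh : IsHomHom E) :
    ∀ x y, Theta E x y → E x y := by
  intro x y hθ
  by_contra hxy
  obtain ⟨u, v, hθuv, huv⟩ := hbd
  obtain ⟨g, hg, hgy, hgx⟩ := hhh.exists_endomorphism_of_not_edge hrefl hxy huv
  have : Theta E (g y) (g x) := Theta.map hg (.symm _ _ hθ)
  exact hθuv (hgy ▸ hgx ▸ this)

/-- If `D` is a finite homomorphism-homogeneous reflexive improper
bidirectionally disconnected digraph, then every `θ(D)`-class induces a complete
reflexive graph. -/
theorem stmt_13 {V : Type*} [Fintype V] (E : V → V → Prop)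
    (hrefl : ∀ x, E x x) (himp : Improper E) (hbd : BidirDisconnected E)
    (hhh : IsHomHom E) :
    ∀ x y, Theta E x y → E x y :=
  stmt_13_general E hrefl hbd hhh
end

section
/- Let D be a finite homomorphism-homogeneous reflexive bidirectionally disconnected improper digraph, and let S, T be distinct θ(D)-classes with edges in both directions between S and T (S ⇄ T). If r → t → s for some r, s ∈ S and t ∈ T, then for every u ∈ T, either r → u → s or s → u → r. -/
/-!
Suppose neither `r → u → s` nor `s → u → r`. Then for one ordering `(c, d)` of `{r, s}`
every edge between `d` and `u` is matched by the same edge between `c` and `u`, so the map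
sending `d` to `c` and fixing `c` and `u` is a homomorphism of the subdigraph induced on
`{c, d, u}`. By homomorphism-homogeneity it extends to an endomorphism `g`, which sends
`r → t → s` to `c ⇄ g t`. Endomorphisms preserve `θ(D)`, so `g t` stays in the class of `u`,
and `c ⇄ g t` merges the classes `S` and `T`.
-/

section

variable {V : Type*} {E : V → V → Prop}

theorem Theta.symm {p q : V} (h : Theta E p q) : Theta E q p :=
  Relation.EqvGen.symm _ _ h

theorem Theta.trans {p q w : V} (h₁ : Theta E p q) (h₂ : Theta E q w) : Theta E p w :=
  Relation.EqvGen.trans _ _ _ h₁ h₂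

theorem Theta.map_s15 {g : V → V} (hg : ∀ a b, E a b → E (g a) (g b)) {p q : V}
    (h : Theta E p q) : Theta E (g p) (g q) := by
  induction h with
  | rel a b h => exact Relation.EqvGen.rel _ _ ⟨hg _ _ h.1, hg _ _ h.2⟩
  | refl a => exact Relation.EqvGen.refl _
  | symm a b _ ih => exact ih.symm
  | trans a b c _ _ ih₁ ih₂ => exact ih₁.trans ih₂

theorem theta_map_of_map_eq {g : V → V} (hg : ∀ a b, E a b → E (g a) (g b)) {r s t : V}
    (hrt : E r t) (hts : E t s) (hgrs : g r = g s) : Theta E (g r) (g t) :=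
  Relation.EqvGen.rel _ _ ⟨hg _ _ hrt, hgrs ▸ hg _ _ hts⟩

theorem IsHomHom.exists_endo_collapse (hhh : IsHomHom E) (hrefl : ∀ x, E x x) {c d u : V}
    (hud : u ≠ d) (hin : E d u → E c u) (hout : E u d → E u c) :
    ∃ g : V → V, (∀ a b, E a b → E (g a) (g b)) ∧ g c = c ∧ g d = c ∧ g u = u := by
  classical
  set f : V → V := Function.update id d c
  have fc : f c = c := by by_cases hcd : c = d <;> simp [f, hcd]
  have fd : f d = c := by simp [f]
  have fu : f u = u := by simp [f, hud]
  have hf : ∀ p ∈ ({c, d, u} : Set V), ∀ q ∈ ({c, d, u} : Set V), E p q → E (f p) (f q) := by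
    intro p hp q hq hpq
    simp only [Set.mem_insert_iff, Set.mem_singleton_iff] at hp hq
    rcases hp with rfl | rfl | rfl <;> rcases hq with rfl | rfl | rfl <;>
      simp only [fc, fd, fu] <;> first | exact hpq | exact hrefl _ | exact hin hpq | exact hout hpq
  obtain ⟨g, hg, hgf⟩ := hhh {c, d, u} f (Set.toFinite _) hf
  exact ⟨g, hg, by rw [hgf c (by simp), fc], by rw [hgf d (by simp), fd],
    by rw [hgf u (by simp), fu]⟩

theorem not_forall_edge_imp_of_theta_path (hhh : IsHomHom E) (hrefl : ∀ x, E x x) {x y : V}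
    (hxy : ¬ Theta E x y) {c d t u : V} (hc : Theta E c x) (hd : Theta E d x)
    (hu : Theta E u y) (htu : Theta E t u) (hpath : (E c t ∧ E t d) ∨ (E d t ∧ E t c)) :
    ¬ ((E d u → E c u) ∧ (E u d → E u c)) := by
  rintro ⟨hin, hout⟩
  have hud : u ≠ d := by
    rintro rfl
    exact hxy (hd.symm.trans hu)
  obtain ⟨g, hg, hgc, hgd, hgu⟩ := hhh.exists_endo_collapse hrefl hud hin hout
  have hct : Theta E c (g t) := by
    rcases hpath with ⟨hct, htd⟩ | ⟨hdt, htc⟩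
    · simpa [hgc] using theta_map_of_map_eq hg hct htd (hgc.trans hgd.symm)
    · simpa [hgd] using theta_map_of_map_eq hg hdt htc (hgd.trans hgc.symm)
  have htu' : Theta E (g t) u := by simpa [hgu] using htu.map_s15 hg
  exact hxy (hc.symm.trans (hct.trans (htu'.trans hu)))

end

theorem stmt_15_general {V : Type*} (E : V → V → Prop)
    (hrefl : ∀ x, E x x)
    (hhh : IsHomHom E)
    (x y : V) (hxy : ¬ Theta E x y)
    (r s t : V) (hr : Theta E r x) (hs : Theta E s x) (ht : Theta E t y)
    (hrt : E r t) (hts : E t s) :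
    ∀ u, Theta E u y → (E r u ∧ E u s) ∨ (E s u ∧ E u r) := by
  intro u hu
  have htu : Theta E t u := ht.trans hu.symm
  have hrs := not_forall_edge_imp_of_theta_path hhh hrefl hxy hr hs hu htu (.inl ⟨hrt, hts⟩)
  have hsr := not_forall_edge_imp_of_theta_path hhh hrefl hxy hs hr hu htu (.inr ⟨hrt, hts⟩)
  tauto

/-- Let `D` be a finite homomorphism-homogeneous reflexive bidirectionally
disconnected improper digraph, and let `S = [x]`, `T = [y]` be distinct `θ(D)`-classes
with edges in both directions between them. If `r → t → s` with `r, s ∈ S`, `t ∈ T`,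
then for every `u ∈ T`, either `r → u → s` or `s → u → r`. -/
theorem stmt_15 {V : Type*} [Fintype V] (E : V → V → Prop)
    (hrefl : ∀ x, E x x) (himp : Improper E) (hbd : BidirDisconnected E)
    (hhh : IsHomHom E)
    (x y : V) (hxy : ¬ Theta E x y)
    (hST : ∃ s t, Theta E s x ∧ Theta E t y ∧ E s t)
    (hTS : ∃ s t, Theta E s x ∧ Theta E t y ∧ E t s)
    (r s t : V) (hr : Theta E r x) (hs : Theta E s x) (ht : Theta E t y)
    (hrt : E r t) (hts : E t s) :
    ∀ u, Theta E u y → (E r u ∧ E u s) ∨ (E s u ∧ E u r) :=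
  stmt_15_general E hrefl hhh x y hxy r s t hr hs ht hrt hts
end
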